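/- Let (K, δ) be a differential field of characteristic zero, a ∈ K, and (L, δ_L) a differential extension containing a nonzero u with δ_L(u) = a·u. Suppose an algebraic differential extension (M, δ_M) of (L, δ_L) contains z with δ_M(z) = u + a·z. Then there exists w ∈ L with δ_L(w) = 1. -/

import Mathlib

/-!
Put `v = z / u`, so that `v′ = 1`. If `p = X ^ (m + 1) + c X ^ m + ⋯` is the minimal polynomial
of `v` over `L`, differentiating `p(v) = 0` shows that `v` is a root of `p^δ + p'`, where `p^δ`
differentiates the coefficients of `p`. This polynomial has degree at most `m`, so it vanishes;
its coefficient of `X ^ m` gives `c′ + (m + 1) = 0`, hence `w = -c / (m + 1)` has `w′ = 1`.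
-/

def Derivation.ofLeibniz {A : Type*} [CommRing A] (d : A → A)
    (hadd : ∀ x y, d (x + y) = d x + d y) (hmul : ∀ x y, d (x * y) = d x * y + x * d y) :
    Derivation ℤ A A :=
  Derivation.mk' (AddMonoidHom.mk' d hadd).toIntLinearMap fun x y => by
    simp only [AddMonoidHom.coe_toIntLinearMap, AddMonoidHom.mk'_apply, smul_eq_mul, hmul]
    ring

namespace Differential

open Polynomial

variable {A : Type*} [Field A] [Differential A]

theorem deriv_div_eq_one {a u z : A} (hu : u ≠ 0) (hu' : u′ = a * u) (hz : z′ = u + a * z) :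
    (z / u)′ = 1 := by
  rw [Derivation.leibniz_div, hu', hz, smul_eq_mul, smul_eq_mul, smul_eq_mul]
  field_simp
  ring

theorem degree_mapCoeffs_add_derivative_lt {p : A[X]} (hp : p.Monic) :
    (mapCoeffs p + derivative p).degree < p.natDegree := by
  rw [degree_lt_iff_coeff_zero]
  intro m hm
  have hsucc : p.coeff (m + 1) = 0 := coeff_eq_zero_of_natDegree_lt (by omega)
  rcases hm.eq_or_lt with rfl | hlt
  · simp [coeff_derivative, hp.coeff_natDegree]
  · simp [coeff_derivative, hsucc, coeff_eq_zero_of_natDegree_lt hlt]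

theorem exists_deriv_eq_one_of_isIntegral [CharZero A] {B : Type*} [CommRing B] [Nontrivial B]
    [Differential B] [Algebra A B] [DifferentialAlgebra A B] {v : B} (hv : IsIntegral A v)
    (hv' : v′ = 1) : ∃ w : A, w′ = 1 := by
  set p := minpoly A v
  obtain ⟨m, hm⟩ : ∃ m, p.natDegree = m + 1 :=
    Nat.exists_eq_add_one.mpr (minpoly.natDegree_pos hv)
  have hq : mapCoeffs p + derivative p = 0 := by
    by_contra hq
    refine (degree_mapCoeffs_add_derivative_lt (minpoly.monic hv)).not_ge ?_
    rw [← degree_eq_natDegree (minpoly.ne_zero hv)]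
    refine minpoly.degree_le_of_ne_zero A v hq ?_
    have := deriv_aeval_eq v p
    rw [minpoly.aeval, Derivation.map_zero, hv', mul_one] at this
    rw [map_add, this]
  have hcoeff : (p.coeff m)′ = -(m + 1) := by
    have := congrArg (coeff · m) hq
    have hlead : p.coeff (m + 1) = 1 := hm ▸ (minpoly.monic hv).coeff_natDegree
    simp only [coeff_add, coeff_mapCoeffs, coeff_derivative, hlead, one_mul, coeff_zero] at this
    linear_combination this
  refine ⟨-(p.coeff m / (m + 1)), ?_⟩
  have hm1 : (m + 1 : A) ≠ 0 := m.cast_add_one_ne_zero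
  rw [Derivation.map_neg, Derivation.leibniz_div_const _ _ _ (by simp), hcoeff,
    smul_eq_mul]
  field_simp

end Differential

open Differential in
theorem stmt11_general {K L M : Type*} [Field K] [CharZero K] [Field L] [Algebra K L]
    [Field M] [Algebra L M] [Algebra.IsAlgebraic L M]
    (δL : L → L)
    (hLadd : ∀ x y : L, δL (x + y) = δL x + δL y)
    (hLmul : ∀ x y : L, δL (x * y) = δL x * y + x * δL y)
    (δM : M → M)
    (hMadd : ∀ x y : M, δM (x + y) = δM x + δM y)
    (hMmul : ∀ x y : M, δM (x * y) = δM x * y + x * δM y)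
    (hMcomp : ∀ x : L, δM (algebraMap L M x) = algebraMap L M (δL x))
    (a : K) (u : L) (hu : u ≠ 0) (hueq : δL u = algebraMap K L a * u)
    (z : M)
    (hz : δM z = algebraMap L M u + algebraMap L M (algebraMap K L a) * z) :
    ∃ w : L, δL w = 1 := by
  have : CharZero L := charZero_of_injective_algebraMap (algebraMap K L).injective
  let : Differential L := ⟨.ofLeibniz δL hLadd hLmul⟩
  let : Differential M := ⟨.ofLeibniz δM hMadd hMmul⟩
  have : DifferentialAlgebra L M := ⟨hMcomp⟩
  have huM : (algebraMap L M u)′ = algebraMap L M (algebraMap K L a) * algebraMap L M u := by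
    rw [deriv_algebraMap, ← map_mul]
    exact congrArg _ hueq
  have hv := deriv_div_eq_one ((map_ne_zero _).mpr hu) huM hz
  exact exists_deriv_eq_one_of_isIntegral (Algebra.IsIntegral.isIntegral (R := L) _) hv

/-- Let `(L, δ_L)` be a differential extension of `(K, δ)` containing a nonzero `u`
with `δ_L(u) = a·u`, `a ∈ K`. If an algebraic differential extension `(M, δ_M)` of `(L, δ_L)`
contains `z` with `δ_M(z) = u + a·z`, then there exists `w ∈ L` with `δ_L(w) = 1`. -/
theorem stmt11 {K L M : Type*} [Field K] [CharZero K] [Field L] [Algebra K L]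
    [Field M] [Algebra L M] [Algebra.IsAlgebraic L M]
    (δ : K → K)
    (hadd : ∀ a b : K, δ (a + b) = δ a + δ b)
    (hmul : ∀ a b : K, δ (a * b) = δ a * b + a * δ b)
    (δL : L → L)
    (hLadd : ∀ x y : L, δL (x + y) = δL x + δL y)
    (hLmul : ∀ x y : L, δL (x * y) = δL x * y + x * δL y)
    (hLcomp : ∀ a : K, δL (algebraMap K L a) = algebraMap K L (δ a))
    (δM : M → M)
    (hMadd : ∀ x y : M, δM (x + y) = δM x + δM y)
    (hMmul : ∀ x y : M, δM (x * y) = δM x * y + x * δM y)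
    (hMcomp : ∀ x : L, δM (algebraMap L M x) = algebraMap L M (δL x))
    (a : K) (u : L) (hu : u ≠ 0) (hueq : δL u = algebraMap K L a * u)
    (z : M)
    (hz : δM z = algebraMap L M u + algebraMap L M (algebraMap K L a) * z) :
    ∃ w : L, δL w = 1 :=
  stmt11_general δL hLadd hLmul δM hMadd hMmul hMcomp a u hu hueq z hz
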